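/- There exists an integer K such that for all integers k ≥ K and all integers n ≥ k³, the size of F_{k,n} satisfies n²/(4k³) ≤ |F_{k,n}| ≤ 2n²/k³. -/

import Mathlib

/-- The `k`-term arithmetic progression `{a, a+d, ..., a+(k-1)d}` as a finite set. -/
def AP (a d k : ℕ) : Finset ℕ := (Finset.range k).image (fun i => a + i * d)

/-- `Fkn k n` is the family of `k`-term arithmetic progressions contained in
`{1, ..., n}` whose common difference `d` satisfies `n/k ≤ d < n/(k-1)`. -/
noncomputable def Fkn (k n : ℕ) : Finset (Finset ℕ) :=
  ((Finset.Icc 1 n ×ˢ Finset.Icc 1 n).filter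
      (fun p => p.1 + (k - 1) * p.2 ≤ n ∧ (n : ℝ) / (k : ℝ) ≤ (p.2 : ℝ) ∧
        (p.2 : ℝ) < (n : ℝ) / ((k : ℝ) - 1))).image (fun p => AP p.1 p.2 k)

/-! For `k ≥ 2` the map `(a, d) ↦ AP a d k` is injective, so `|F_{k,n}|` counts the pairs with
`1 ≤ a`, `a + (k-1)d ≤ n` and `n ≤ kd`. They lie in the box `[1, ⌊n/k⌋] × [⌊n/k⌋, ⌊n/(k-1)⌋]`,
which gives the upper bound. Conversely, with `c = ⌊n/k⌋` and `A = n - (k-1)c ≥ n/k`, every pair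
with `c < d ≤ c + m` and `a ≤ A - (k-1)m` is admissible; choosing `m ≈ A/(2(k-1))` gives
at least `(A² - (k-1)²)/(4(k-1))` pairs. -/

open Finset

/-- `m = ⌊(A + s)/(2s)⌋` works: `4s(A - sm)m = A² - (A - 2sm)²` and `|A - 2sm| ≤ s`. -/
lemma exists_sq_le_four_mul_sub_mul_mul_add_sq (A s : ℕ) (hs : 0 < s) :
    ∃ m, A ^ 2 ≤ 4 * s * ((A - s * m) * m) + s ^ 2 := by
  obtain ⟨m, hlo, hhi⟩ : ∃ m, 2 * s * m ≤ A + s ∧ A + s < 2 * s * (m + 1) :=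
    ⟨_, Nat.mul_div_le (A + s) (2 * s), Nat.lt_mul_div_succ (A + s) (by omega)⟩
  have hsm : s * m ≤ A := by
    rcases Nat.eq_zero_or_pos m with rfl | hm
    · simp
    · nlinarith
  refine ⟨m, ?_⟩
  obtain ⟨t, rfl⟩ : ∃ t, A = t + s * m := ⟨A - s * m, by omega⟩
  rw [Nat.add_sub_cancel]
  zify at hlo hhi ⊢
  nlinarith [mul_nonneg (by linarith : (0 : ℤ) ≤ s - (t - s * m))
    (by linarith : (0 : ℤ) ≤ s + (t - s * m))]

lemma mem_AP_bounds {x a d k : ℕ} (hx : x ∈ AP a d k) : a ≤ x ∧ x ≤ a + (k - 1) * d := by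
  obtain ⟨i, hi, rfl⟩ := mem_image.1 hx
  refine ⟨Nat.le_add_right _ _, ?_⟩
  gcongr
  exact Nat.le_sub_one_of_lt (mem_range.1 hi)

lemma first_mem_AP (a d : ℕ) {k : ℕ} (hk : 0 < k) : a ∈ AP a d k :=
  mem_image.2 ⟨0, mem_range.2 hk, by simp⟩

lemma last_mem_AP (a d : ℕ) {k : ℕ} (hk : 0 < k) : a + (k - 1) * d ∈ AP a d k :=
  mem_image.2 ⟨k - 1, mem_range.2 (by omega), rfl⟩

lemma AP_injective {k : ℕ} (hk : 2 ≤ k) :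
    Function.Injective (fun p : ℕ × ℕ => AP p.1 p.2 k) := by
  rintro ⟨a, d⟩ ⟨a', d'⟩ (h : AP a d k = AP a' d' k)
  have h₁ := mem_AP_bounds (h ▸ first_mem_AP a d (by omega))
  have h₂ := mem_AP_bounds (h.symm ▸ first_mem_AP a' d' (by omega))
  have h₃ := mem_AP_bounds (h ▸ last_mem_AP a d (by omega))
  have h₄ := mem_AP_bounds (h.symm ▸ last_mem_AP a' d' (by omega))
  have ha : a = a' := by omega
  subst ha
  exact Prod.ext rfl (show d = d' from
    Nat.eq_of_mul_eq_mul_left (by omega : 0 < k - 1) (by omega))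

/-- The pairs `(a, d)` of the progressions in `F_{k,n}`; `d < n/(k-1)` follows from
`1 ≤ a` and `a + (k-1)d ≤ n`. -/
def fknParams (k n : ℕ) : Finset (ℕ × ℕ) :=
  (Icc 1 n ×ˢ Icc 1 n).filter (fun p => p.1 + (k - 1) * p.2 ≤ n ∧ n ≤ k * p.2)

lemma mem_fknParams {k n : ℕ} (hk : 2 ≤ k) {a d : ℕ} :
    (a, d) ∈ fknParams k n ↔ 1 ≤ a ∧ a + (k - 1) * d ≤ n ∧ n ≤ k * d := by
  simp only [fknParams, mem_filter, mem_product, mem_Icc]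
  refine ⟨fun h => ⟨h.1.1.1, h.2⟩, fun ⟨ha, hle, hkd⟩ =>
    ⟨⟨⟨ha, (Nat.le_add_right a _).trans hle⟩, ?_, ?_⟩, hle, hkd⟩⟩
  · exact pos_of_mul_pos_right (a := k) (by omega) (Nat.zero_le k)
  · exact (Nat.le_mul_of_pos_left d (by omega : 0 < k - 1)).trans (by omega)

lemma card_Fkn {k n : ℕ} (hk : 2 ≤ k) : (Fkn k n).card = (fknParams k n).card := by
  rw [Fkn, card_image_of_injective _ (AP_injective hk), fknParams]
  congr 1
  refine filter_congr fun ⟨a, d⟩ hbox => and_congr_right fun (hle : a + (k - 1) * d ≤ n) => ?_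
  have ha : 1 ≤ a := (mem_Icc.1 (mem_product.1 hbox).1).1
  have hk₁ : ((k - 1 : ℕ) : ℝ) = k - 1 := Nat.cast_pred (by omega)
  rw [div_le_iff₀ (by positivity), ← hk₁, lt_div_iff₀ (by exact_mod_cast (by omega : 0 < k - 1))]
  norm_cast
  rw [mul_comm d, mul_comm d]
  exact ⟨And.left, fun h => ⟨h, by omega⟩⟩

lemma fknParams_subset {k n : ℕ} (hk : 2 ≤ k) :
    fknParams k n ⊆ Icc 1 (n / k) ×ˢ Icc (n / k) (n / (k - 1)) := by
  rintro ⟨a, d⟩ h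
  obtain ⟨ha, hle, hkd⟩ := (mem_fknParams hk).1 h
  obtain ⟨s, rfl⟩ : ∃ s, k = s + 1 := ⟨k - 1, by omega⟩
  rw [Nat.add_sub_cancel] at hle ⊢
  simp only [mem_product, mem_Icc]
  refine ⟨⟨ha, (Nat.le_div_iff_mul_le (by omega)).2 (by nlinarith)⟩, Nat.div_le_of_le_mul hkd,
    (Nat.le_div_iff_mul_le (by omega)).2 (by nlinarith)⟩

lemma card_fknParams_le {k n : ℕ} (hk : 2 ≤ k) :
    ((fknParams k n).card : ℝ) ≤ n / k * (n / (k - 1) - n / k + 2) := by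
  have hcard := (card_le_card (fknParams_subset (n := n) hk)).trans_eq
    (by rw [card_product, Nat.card_Icc, Nat.card_Icc, Nat.add_sub_cancel])
  have hdiv : n / k ≤ n / (k - 1) := Nat.div_le_div_left (by omega) (by omega)
  have hk₁ : ((k - 1 : ℕ) : ℝ) = k - 1 := Nat.cast_pred (by omega)
  have hfloor : (n : ℝ) / k - 1 < (n / k : ℕ) := by
    simpa only [Nat.floor_div_eq_div] using Nat.sub_one_lt_floor ((n : ℝ) / k)
  have hfloor' : ((n / (k - 1) : ℕ) : ℝ) ≤ n / (k - 1) := hk₁ ▸ Nat.cast_div_le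
  calc ((fknParams k n).card : ℝ) ≤ ((n / k * (n / (k - 1) + 1 - n / k) : ℕ) : ℝ) := by
        exact_mod_cast hcard
    _ ≤ n / k * (n / (k - 1) - n / k + 2) := by
        rw [Nat.cast_mul, Nat.cast_sub (by omega)]
        push_cast
        have : ((n / k : ℕ) : ℝ) ≤ (n / (k - 1) : ℕ) := by exact_mod_cast hdiv
        exact mul_le_mul Nat.cast_div_le (by linarith) (by linarith) (by positivity)

lemma Icc_product_subset_fknParams {k n : ℕ} (hk : 2 ≤ k) (m : ℕ) :
    Icc 1 (n - (k - 1) * (n / k) - (k - 1) * m) ×ˢ Icc (n / k + 1) (n / k + m) ⊆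
      fknParams k n := by
  rintro ⟨a, d⟩ h
  simp only [mem_product, mem_Icc] at h
  obtain ⟨⟨ha, ha'⟩, hd, hd'⟩ := h
  have hsd : (k - 1) * d ≤ (k - 1) * (n / k) + (k - 1) * m := by
    rw [← mul_add]
    exact Nat.mul_le_mul_left _ hd'
  have hn : n < k * (n / k + 1) := Nat.lt_mul_div_succ n (by omega)
  exact (mem_fknParams hk).2 ⟨ha, by omega, hn.le.trans (Nat.mul_le_mul_left _ hd)⟩

lemma card_fknParams_ge {k n : ℕ} (hk : 2 ≤ k) :
    ((n : ℝ) / k) ^ 2 ≤ 4 * (k - 1) * (fknParams k n).card + (k - 1) ^ 2 := by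
  have hq : (k - 1) * (n / k) ≤ n :=
    (Nat.mul_le_mul_right _ (by omega)).trans (Nat.mul_div_le n k)
  set A := n - (k - 1) * (n / k)
  obtain ⟨m, hm⟩ := exists_sq_le_four_mul_sub_mul_mul_add_sq A (k - 1) (by omega)
  have hcard : (A - (k - 1) * m) * m ≤ (fknParams k n).card :=
    (card_le_card (Icc_product_subset_fknParams hk m)).trans_eq' (by simp [A])
  have hk₁ : ((k - 1 : ℕ) : ℝ) = k - 1 := Nat.cast_pred (by omega)
  have hA : (n : ℝ) / k ≤ A := by
    have h₁ : ((k : ℝ) - 1) * (n / k : ℕ) ≤ (k - 1) * (n / k) :=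
      mul_le_mul_of_nonneg_left Nat.cast_div_le (by linarith)
    have h₂ : ((k : ℝ) - 1) * (n / k) = n - n / k := by field_simp
    rw [Nat.cast_sub hq, Nat.cast_mul, hk₁]
    linarith
  have hm' : (A : ℝ) ^ 2 ≤ 4 * (k - 1) * (((A - (k - 1) * m) * m : ℕ) : ℝ) + (k - 1) ^ 2 := by
    rw [← hk₁]; exact_mod_cast hm
  have hcard' : (((A - (k - 1) * m) * m : ℕ) : ℝ) ≤ (fknParams k n).card := by
    exact_mod_cast hcard
  calc ((n : ℝ) / k) ^ 2 ≤ (A : ℝ) ^ 2 := by gcongr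
    _ ≤ _ := by nlinarith

lemma sq_div_four_mul_pow_three_le {k n F : ℝ} (hk : 1 ≤ k) (hn : k ^ 3 ≤ n)
    (hF : (n / k) ^ 2 ≤ 4 * (k - 1) * F + (k - 1) ^ 2) : n ^ 2 / (4 * k ^ 3) ≤ F := by
  obtain ⟨x, rfl⟩ : ∃ x, n = k * x := ⟨n / k, by field_simp⟩
  have hx : k ^ 2 ≤ x := le_of_mul_le_mul_left (by nlinarith) (by positivity : 0 < k)
  rw [mul_div_cancel_left₀ x (by positivity)] at hF
  rw [div_le_iff₀ (by positivity)]
  have h4F : (k - 1) ^ 2 ≤ 4 * F := by nlinarith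
  nlinarith

lemma le_two_mul_sq_div_pow_three {k n F : ℝ} (hk : 4 ≤ k) (hn : k ^ 3 ≤ n)
    (hF : F ≤ n / k * (n / (k - 1) - n / k + 2)) : F ≤ 2 * n ^ 2 / k ^ 3 := by
  obtain ⟨x, rfl⟩ : ∃ x, n = k * x := ⟨n / k, by field_simp⟩
  have hx : k ^ 2 ≤ x := le_of_mul_le_mul_left (by nlinarith) (by positivity : 0 < k)
  have hk1 : 0 < k - 1 := by linarith
  rw [show k * x / k * (k * x / (k - 1) - k * x / k + 2) = x * (x / (k - 1) + 2) by
    field_simp; ring] at hF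
  set y := x / (k - 1)
  have hxy : x = (k - 1) * y := by simp only [y]; field_simp
  have hy : 2 * k ≤ (k - 2) * y := by
    rw [mul_div_assoc', le_div_iff₀ hk1]; nlinarith
  have hkF : k * F ≤ 2 * x ^ 2 := by
    calc k * F ≤ x * (k * y + 2 * k) := by nlinarith
      _ ≤ x * (2 * ((k - 1) * y)) := mul_le_mul_of_nonneg_left (by linarith) (by nlinarith)
      _ = 2 * x ^ 2 := by rw [← hxy]; ring
  rw [le_div_iff₀ (by positivity)]
  nlinarith

/-- For all large `k` and all `n ≥ k³`, `n²/(4k³) ≤ |F_{k,n}| ≤ 2n²/k³`. -/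
theorem card_Fkn_bounds :
    ∃ K : ℕ, ∀ k : ℕ, K ≤ k → ∀ n : ℕ, k ^ 3 ≤ n →
      (n : ℝ) ^ 2 / (4 * (k : ℝ) ^ 3) ≤ ((Fkn k n).card : ℝ) ∧
        ((Fkn k n).card : ℝ) ≤ 2 * (n : ℝ) ^ 2 / (k : ℝ) ^ 3 := by
  refine ⟨4, fun k hk n hn => ?_⟩
  have hk' : (4 : ℝ) ≤ k := by exact_mod_cast hk
  have hn' : (k : ℝ) ^ 3 ≤ n := by exact_mod_cast hn
  rw [card_Fkn (by omega)]
  exact ⟨sq_div_four_mul_pow_three_le (by linarith) hn' (card_fknParams_ge (by omega)),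
    le_two_mul_sq_div_pow_three hk' hn' (card_fknParams_le (by omega))⟩
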